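/- arXiv:2110.07788 — 2 statements merged into one kernel-verified Lean document; each statement's English description precedes it below -/
import Mathlib

section
/- Define N_0 = 1 and N_i = ⌈√(T · N_{i-1})⌉ for a natural number T ≥ 4. Then with B̃ = ⌈log₂ log₂ T⌉, the partial sum N_1 + N_2 + ... + N_{B̃+1} is at least T. In particular, the algorithm with these batch sizes terminates within at most ⌈log₂ log₂ T⌉ + 1 batches. -/
/-! Dropping the ceilings, the recursion `x ↦ √(T x)` started at `1` gives `T ^ (1 - 2⁻ⁱ)`, and
rounding up only helps, so `N i ≥ T ^ (1 - 2⁻ⁱ) = T / T ^ (2⁻ⁱ)`. Once `i ≥ log₂ log₂ T` we have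
`T ^ (2⁻ⁱ) ≤ 2`, so both `N B` and `N (B + 1)` are at least `T / 2`, and both occur in the sum
(`B ≥ 1` because `T > 2`). -/

open Real Finset

theorem rpow_one_sub_half_pow_succ {T : ℝ} (hT : 0 < T) (i : ℕ) :
    T ^ (1 - (1 / 2 : ℝ) ^ (i + 1)) = √(T * T ^ (1 - (1 / 2 : ℝ) ^ i)) := by
  calc T ^ (1 - (1 / 2 : ℝ) ^ (i + 1)) = T ^ ((1 + (1 - (1 / 2 : ℝ) ^ i)) * (1 / 2)) := by
        ring_nf
    _ = √(T * T ^ (1 - (1 / 2 : ℝ) ^ i)) := by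
        rw [rpow_mul hT.le, rpow_add hT, rpow_one, sqrt_eq_rpow]

theorem rpow_one_sub_half_pow_le {T : ℝ} (hT : 0 < T) {x : ℕ → ℝ} (h0 : 1 ≤ x 0)
    (hstep : ∀ i, √(T * x i) ≤ x (i + 1)) (i : ℕ) : T ^ (1 - (1 / 2 : ℝ) ^ i) ≤ x i := by
  induction i with
  | zero => simpa using h0
  | succ i ih =>
    rw [rpow_one_sub_half_pow_succ hT]
    exact (sqrt_le_sqrt (mul_le_mul_of_nonneg_left ih hT.le)).trans (hstep i)

theorem rpow_half_pow_le_two {T : ℝ} (hT : 1 < T) {k : ℕ} (hk : logb 2 (logb 2 T) ≤ k) :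
    T ^ ((1 / 2 : ℝ) ^ k) ≤ 2 := by
  have hlog : logb 2 T ≤ 2 ^ k := by
    rwa [logb_le_iff_le_rpow one_lt_two (logb_pos one_lt_two hT), rpow_natCast] at hk
  calc T ^ ((1 / 2 : ℝ) ^ k) = 2 ^ (logb 2 T * (1 / 2 : ℝ) ^ k) := by
        rw [rpow_mul zero_le_two, rpow_logb two_pos (by norm_num) (by linarith)]
    _ ≤ 2 ^ (1 : ℝ) := by
        gcongr
        · norm_num
        · rw [div_pow, one_pow, mul_one_div]
          exact (div_le_one (by positivity)).2 hlog
    _ = 2 := rpow_one 2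

theorem half_le_rpow_one_sub {T e : ℝ} (hT : 0 < T) (he : T ^ e ≤ 2) : T / 2 ≤ T ^ (1 - e) := by
  rw [rpow_sub hT, rpow_one]
  exact div_le_div_of_nonneg_left hT.le (by positivity) he

theorem add_le_sum_Icc_one {N : ℕ → ℕ} {B : ℕ} (hB : 1 ≤ B) :
    N B + N (B + 1) ≤ ∑ i ∈ Icc 1 (B + 1), N i := by
  rw [← sum_pair (by omega : B ≠ B + 1)]
  exact sum_le_sum_of_subset (by intro x; simp only [mem_insert, mem_singleton, mem_Icc]; omega)

theorem stmt_2 (T : ℕ) (hT : 4 ≤ T) (N : ℕ → ℕ)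
    (h0 : N 0 = 1) (hrec : ∀ i : ℕ, N (i + 1) = ⌈Real.sqrt ((T : ℝ) * N i)⌉₊)
    (B : ℕ) (hB : B = ⌈Real.logb 2 (Real.logb 2 (T : ℝ))⌉₊) :
    (T : ℕ) ≤ ∑ i ∈ Finset.Icc 1 (B + 1), N i := by
  have hT4 : (4 : ℝ) ≤ T := by exact_mod_cast hT
  have hBlog : logb 2 (logb 2 T) ≤ B := hB ▸ Nat.le_ceil _
  have hB1 : 1 ≤ B := by
    rw [hB, Nat.one_le_ceil_iff]
    refine logb_pos one_lt_two ?_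
    rw [lt_logb_iff_rpow_lt one_lt_two (by linarith), rpow_one]
    linarith
  have hNlower : ∀ i, (T : ℝ) ^ (1 - (1 / 2 : ℝ) ^ i) ≤ N i :=
    rpow_one_sub_half_pow_le (by linarith) (by simp [h0]) fun i => hrec i ▸ Nat.le_ceil _
  have hhalf : ∀ k : ℕ, logb 2 (logb 2 T) ≤ k → (T : ℝ) / 2 ≤ N k := fun k hk =>
    (half_le_rpow_one_sub (by linarith) (rpow_half_pow_le_two (by linarith) hk)).trans (hNlower k)
  have hpair : T ≤ N B + N (B + 1) := by
    have h1 := hhalf B hBlog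
    have h2 := hhalf (B + 1) (by push_cast; linarith)
    exact_mod_cast (by linarith : (T : ℝ) ≤ N B + N (B + 1))
  exact hpair.trans (add_le_sum_Icc_one hB1)
end

section
/- Let T ≥ 2 be a real number, 0 < η < 1, B ≥ 2 a natural number, and define N_i = ⌈T^((1−η^i)/(1−η^B))⌉ for 1 ≤ i ≤ B−1. Then for every i with 2 ≤ i ≤ B−1, N_i · N_{i−1}^(−η) ≤ N_1 + N_1^(1−η). -/
/-! Writing `e i = (1 - η ^ i) / (1 - η ^ B)`, one has `e (j + 1) = e 1 + η * e j`, so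
`T ^ e (j + 1) = T ^ e 1 * (T ^ e j) ^ η` and hence `N (j + 1) ≤ N 1 * N j ^ η + 1`.
Multiplying by `N j ^ (-η) ≤ 1` gives `N 1 + 1`, and `1 ≤ N 1 ^ (1 - η)`. -/

theorem Nat.ceil_rpow_add_mul_le {T x y η : ℝ} (hT : 0 < T) (hη : 0 ≤ η) :
    (⌈T ^ (x + η * y)⌉₊ : ℝ) ≤ ⌈T ^ x⌉₊ * (⌈T ^ y⌉₊ : ℝ) ^ η + 1 := by
  have hpow : T ^ (x + η * y) = T ^ x * (T ^ y) ^ η := by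
    rw [Real.rpow_add hT, mul_comm η, Real.rpow_mul hT.le]
  have hfactor : T ^ x * (T ^ y) ^ η ≤ ⌈T ^ x⌉₊ * (⌈T ^ y⌉₊ : ℝ) ^ η :=
    mul_le_mul (Nat.le_ceil _) (Real.rpow_le_rpow (by positivity) (Nat.le_ceil _) hη)
      (by positivity) (by positivity)
  rw [hpow]
  linarith [Nat.ceil_lt_add_one (by positivity : 0 ≤ T ^ x * (T ^ y) ^ η)]

theorem mul_rpow_neg_le_add_rpow_one_sub {a n m η : ℝ} (hn : 1 ≤ n) (hm : 1 ≤ m)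
    (hη0 : 0 ≤ η) (hη1 : η ≤ 1) (ha : a ≤ n * m ^ η + 1) :
    a * m ^ (-η) ≤ n + n ^ (1 - η) := by
  have hcancel : m ^ η * m ^ (-η) = 1 := by
    rw [← Real.rpow_add (by linarith), add_neg_cancel, Real.rpow_zero]
  have hneg_le : m ^ (-η) ≤ 1 := Real.rpow_le_one_of_one_le_of_nonpos hm (by linarith)
  have hone_le : 1 ≤ n ^ (1 - η) := Real.one_le_rpow hn (by linarith)
  calc a * m ^ (-η) ≤ (n * m ^ η + 1) * m ^ (-η) :=
        mul_le_mul_of_nonneg_right ha (by positivity)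
    _ = n + m ^ (-η) := by rw [add_mul, mul_assoc, hcancel, mul_one, one_mul]
    _ ≤ n + n ^ (1 - η) := by linarith

theorem stmt_10_general (T : ℝ) (hT : 2 ≤ T) (η : ℝ) (hη0 : 0 < η) (hη1 : η < 1)
    (B : ℕ) (N : ℕ → ℕ)
    (hN : ∀ i : ℕ, 1 ≤ i → i ≤ B - 1 →
      N i = ⌈T ^ ((1 - η ^ i) / (1 - η ^ B))⌉₊) :
    ∀ i : ℕ, 2 ≤ i → i ≤ B - 1 →
      (N i : ℝ) * (N (i - 1) : ℝ) ^ (-η) ≤ (N 1 : ℝ) + (N 1 : ℝ) ^ (1 - η) := by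
  intro i hi2 hiB
  obtain ⟨j, rfl⟩ : ∃ j, i = j + 1 := ⟨i - 1, by omega⟩
  rw [Nat.add_sub_cancel]
  have hT0 : 0 < T := by linarith
  have one_le_N : ∀ k, 1 ≤ k → k ≤ B - 1 → (1 : ℝ) ≤ N k := fun k hk hkB => by
    rw [hN k hk hkB, Nat.one_le_cast, Nat.one_le_ceil_iff]
    positivity
  have hexponent : (1 - η ^ (j + 1)) / (1 - η ^ B)
      = (1 - η ^ 1) / (1 - η ^ B) + η * ((1 - η ^ j) / (1 - η ^ B)) := by ring
  refine mul_rpow_neg_le_add_rpow_one_sub (one_le_N 1 le_rfl (by omega))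
    (one_le_N j (by omega) (by omega)) hη0.le hη1.le ?_
  rw [hN (j + 1) (by omega) hiB, hN 1 le_rfl (by omega), hN j (by omega) (by omega), hexponent]
  exact Nat.ceil_rpow_add_mul_le hT0 hη0.le

theorem stmt_10 (T : ℝ) (hT : 2 ≤ T) (η : ℝ) (hη0 : 0 < η) (hη1 : η < 1)
    (B : ℕ) (hB : 2 ≤ B) (N : ℕ → ℕ)
    (hN : ∀ i : ℕ, 1 ≤ i → i ≤ B - 1 →
      N i = ⌈T ^ ((1 - η ^ i) / (1 - η ^ B))⌉₊) :
    ∀ i : ℕ, 2 ≤ i → i ≤ B - 1 →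
      (N i : ℝ) * (N (i - 1) : ℝ) ^ (-η) ≤ (N 1 : ℝ) + (N 1 : ℝ) ^ (1 - η) :=
  stmt_10_general T hT η hη0 hη1 B N hN
end
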